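/- For every integer n ≥ 1, the function Ψ defined by Ψ(ρ) := φ₀'(ρ)/(ρ φ₀(ρ)) for ρ ≠ 0 and Ψ(0) := 1/n is even, continuous, strictly decreasing on [0, ∞), and satisfies Ψ(ρ) < 1/n for every ρ > 0; in particular Ψ is bounded above by 1/n. -/

import Mathlib

open Real Filter

noncomputable def b (n : ℕ) (j : ℕ) : ℝ :=
  ∏ ℓ ∈ Finset.Icc 1 j, 1 / (2 * (ℓ : ℝ) * ((n : ℝ) + 2 * ((ℓ : ℝ) - 1)))

noncomputable def phi0 (n : ℕ) (ρ : ℝ) : ℝ := ∑' j : ℕ, b n j * ρ ^ (2 * j)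

/-- `Ψ(ρ) = φ₀'(ρ)/(ρ φ₀(ρ))` for `ρ ≠ 0`, extended by `Ψ(0) = 1/n`. -/
noncomputable def Psi (n : ℕ) (ρ : ℝ) : ℝ :=
  if ρ = 0 then 1 / (n : ℝ) else deriv (phi0 n) ρ / (ρ * phi0 n ρ)

/-!
With `x = ρ²` we have `φ₀(ρ) = D(x) := ∑ b_j x^j`, and the recursion
`2 (j + 1) (n + 2j) b_{j+1} = b_j` gives `φ₀'(ρ) = ρ N(x)` with `N(x) := ∑ b_j x^j / (n + 2j)`.
Hence `Ψ(ρ) = N(x) / D(x)` is the average of `1 / (n + 2j)` against the weights `b_j x^j`.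
Since `x (N' D - N D') = (∑ j w_j g_j)(∑ w_j) - (∑ w_j g_j)(∑ j w_j)` for `w_j = b_j x^j` and
`g_j = 1 / (n + 2j)`, Chebyshev's sum inequality (`j` increasing, `g_j` decreasing) makes
`N / D` strictly decreasing. The bound `Ψ(ρ) < 1/n` is then `Ψ(ρ) < Ψ(0)`.
-/

theorem tsum_mul_tsum_lt_of_antivary {ι : Type*} {w f g : ι → ℝ} (hw : ∀ i, 0 ≤ w i)
    (hfg : Antivary f g) (hs : Summable w) (hsf : Summable fun i => w i * f i)
    (hsg : Summable fun i => w i * g i) (hsfg : Summable fun i => w i * f i * g i)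
    {i₀ k₀ : ι} (hi₀ : 0 < w i₀) (hk₀ : 0 < w k₀) (hlt : (f i₀ - f k₀) * (g i₀ - g k₀) < 0) :
    (∑' i, w i) * ∑' i, w i * f i * g i < (∑' i, w i * f i) * ∑' i, w i * g i := by
  have hprod {u v : ι → ℝ} (hu : Summable u) (hv : Summable v) :
      HasSum (fun p : ι × ι => u p.1 * v p.2) ((∑' i, u i) * ∑' i, v i) := by
    rw [tsum_mul_tsum_of_summable_norm hu.norm hv.norm]
    exact (summable_mul_of_summable_norm hu.norm hv.norm).hasSum
  -- `∑_{i,k} w_i w_k (f_i - f_k) (g_i - g_k) = 2 ((∑ w) (∑ w f g) - (∑ w f) (∑ w g))`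
  have hsum := ((((hprod hs hsfg).add (hprod hsfg hs)).sub (hprod hsf hsg)).sub
    (hprod hsg hsf)).congr_fun
      (g := fun p => w p.1 * w p.2 * ((f p.1 - f p.2) * (g p.1 - g p.2))) fun p => by ring
  have hneg := hasSum_lt (i := (i₀, k₀)) (fun p => ?_) ?_ hsum hasSum_zero
  · linarith
  · exact mul_nonpos_of_nonneg_of_nonpos (mul_nonneg (hw _) (hw _))
      (hfg.sub_mul_sub_nonpos _ _)
  · exact mul_neg_of_pos_of_neg (mul_pos hi₀ hk₀) hlt

noncomputable def powerSum (c : ℕ → ℝ) (x : ℝ) : ℝ := ∑' j, c j * x ^ j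

def derivCoeff (c : ℕ → ℝ) (j : ℕ) : ℝ := (j + 1) * c (j + 1)

def FactorialBounded (c : ℕ → ℝ) : Prop := ∀ j, |c j| ≤ 1 / j.factorial

theorem powerSum_zero (c : ℕ → ℝ) : powerSum c 0 = c 0 := by
  rw [powerSum, tsum_eq_single 0 fun j hj => by rw [zero_pow hj, mul_zero], pow_zero, mul_one]

theorem summable_natCast_mul_pow_div_factorial (r : ℝ) :
    Summable fun j : ℕ => (j : ℝ) * r ^ j / j.factorial := by
  rw [← summable_nat_add_iff 1]
  refine ((Real.summable_pow_div_factorial r).mul_left r).congr fun j => ?_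
  have : (j.factorial : ℝ) ≠ 0 := by positivity
  rw [Nat.factorial_succ]
  push_cast
  field_simp
  ring

theorem factorialBounded_derivCoeff {c : ℕ → ℝ} (hc : FactorialBounded c) :
    FactorialBounded (derivCoeff c) := fun j => by
  have : (0 : ℝ) < j + 1 := by positivity
  calc |derivCoeff c j| = (j + 1) * |c (j + 1)| := by rw [derivCoeff, abs_mul, abs_of_pos this]
    _ ≤ (j + 1) * (1 / (j + 1).factorial) := by gcongr; exact hc (j + 1)
    _ = 1 / j.factorial := by
        rw [Nat.factorial_succ]
        push_cast
        field_simp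

namespace FactorialBounded

variable {c : ℕ → ℝ}

theorem summable (hc : FactorialBounded c) (x : ℝ) : Summable fun j => c j * x ^ j := by
  refine .of_norm_bounded (Real.summable_pow_div_factorial |x|) fun j => ?_
  rw [norm_mul, norm_pow, Real.norm_eq_abs, Real.norm_eq_abs, mul_comm, div_eq_mul_one_div]
  gcongr
  exact hc j

theorem summable_natCast_mul (hc : FactorialBounded c) (x : ℝ) :
    Summable fun j : ℕ => (j : ℝ) * c j * x ^ j := by
  rw [← summable_nat_add_iff 1]
  refine (((factorialBounded_derivCoeff hc).summable x).mul_left x).congr fun j => ?_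
  simp only [derivCoeff]
  push_cast
  ring

theorem mul_powerSum_derivCoeff (hc : FactorialBounded c) (x : ℝ) :
    x * powerSum (derivCoeff c) x = ∑' j : ℕ, (j : ℝ) * c j * x ^ j := by
  rw [(hc.summable_natCast_mul x).tsum_eq_zero_add, powerSum, ← tsum_mul_left]
  simp only [derivCoeff, CharP.cast_eq_zero, zero_mul, zero_add]
  exact tsum_congr fun j => by push_cast; ring

theorem hasDerivAt_powerSum (hc : FactorialBounded c) (x : ℝ) :
    HasDerivAt (powerSum c) (powerSum (derivCoeff c) x) x := by
  set R := |x| + 1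
  have hR : 1 ≤ R := by simp [R]
  have hx : x ∈ Metric.ball (0 : ℝ) R := by simp [R]
  have hterm (j : ℕ) (y : ℝ) : HasDerivAt (fun y => c j * y ^ j) (c j * (j * y ^ (j - 1))) y :=
    (hasDerivAt_pow j y).const_mul _
  have hbound (j : ℕ) (y : ℝ) (hy : y ∈ Metric.ball (0 : ℝ) R) :
      ‖c j * (j * y ^ (j - 1))‖ ≤ j * R ^ j / j.factorial := by
    rw [mem_ball_zero_iff, Real.norm_eq_abs] at hy
    have hpow : |y| ^ (j - 1) ≤ R ^ j :=
      (pow_le_pow_left₀ (abs_nonneg y) hy.le _).trans (pow_le_pow_right₀ hR (j.sub_le 1))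
    calc ‖c j * (j * y ^ (j - 1))‖ = |c j| * (j * |y| ^ (j - 1)) := by
          simp
      _ ≤ 1 / j.factorial * (j * R ^ j) := by gcongr; exact hc j
      _ = j * R ^ j / j.factorial := by ring
  have hderiv := hasDerivAt_tsum_of_isPreconnected (summable_natCast_mul_pow_div_factorial R)
    Metric.isOpen_ball (convex_ball 0 R).isPreconnected (fun j y _ => hterm j y) hbound
    (Metric.mem_ball_self (by linarith)) (hc.summable 0) hx
  have hsum : ∑' j : ℕ, c j * (j * x ^ (j - 1)) = powerSum (derivCoeff c) x := by
    rw [tsum_eq_zero_add' ?_, powerSum]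
    · simp only [derivCoeff, CharP.cast_eq_zero, zero_mul, mul_zero, zero_add,
        Nat.add_sub_cancel]
      exact tsum_congr fun j => by push_cast; ring
    · refine ((factorialBounded_derivCoeff hc).summable x).congr fun j => ?_
      simp only [derivCoeff, Nat.add_sub_cancel]
      push_cast
      ring
  rw [← hsum]
  exact hderiv

theorem continuous_powerSum (hc : FactorialBounded c) : Continuous (powerSum c) :=
  continuous_iff_continuousAt.2 fun x => (hc.hasDerivAt_powerSum x).continuousAt

end FactorialBounded

section Bessel

variable {n : ℕ}

noncomputable def psiCoeff (n j : ℕ) : ℝ := b n j / (n + 2 * j)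

theorem b_zero : b n 0 = 1 := by simp [b]

theorem b_succ (j : ℕ) : b n (j + 1) = b n j / (2 * (j + 1) * (n + 2 * j)) := by
  rw [b, b, Finset.prod_Icc_succ_top (Nat.le_add_left 1 j)]
  push_cast
  ring

theorem one_le_natCast_add_two_mul (hn : 1 ≤ n) (j : ℕ) : (1 : ℝ) ≤ n + 2 * j := by
  have : (1 : ℝ) ≤ n := by exact_mod_cast hn
  linarith [(Nat.cast_nonneg j : (0 : ℝ) ≤ j)]

theorem b_pos (hn : 1 ≤ n) (j : ℕ) : 0 < b n j := by
  induction j with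
  | zero => simp [b_zero]
  | succ j ih =>
    have := one_le_natCast_add_two_mul hn j
    rw [b_succ]
    positivity

theorem b_le_inv_factorial (hn : 1 ≤ n) (j : ℕ) : b n j ≤ 1 / j.factorial := by
  induction j with
  | zero => simp [b_zero]
  | succ j ih =>
    have hd := one_le_natCast_add_two_mul hn j
    calc b n (j + 1) = b n j / (2 * (j + 1) * (n + 2 * j)) := b_succ j
      _ ≤ b n j / (j + 1) :=
        div_le_div_of_nonneg_left (b_pos hn j).le (by positivity) (by nlinarith)
      _ ≤ 1 / j.factorial / (j + 1) := by gcongr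
      _ = 1 / (j + 1).factorial := by
        rw [Nat.factorial_succ]
        push_cast
        field_simp

theorem factorialBounded_b (hn : 1 ≤ n) : FactorialBounded (b n) := fun j => by
  rw [abs_of_pos (b_pos hn j)]
  exact b_le_inv_factorial hn j

theorem factorialBounded_psiCoeff (hn : 1 ≤ n) : FactorialBounded (psiCoeff n) := fun j => by
  have hd := one_le_natCast_add_two_mul hn j
  rw [psiCoeff, abs_of_pos (div_pos (b_pos hn j) (by linarith))]
  exact (div_le_self (b_pos hn j).le hd).trans (b_le_inv_factorial hn j)

theorem derivCoeff_b (j : ℕ) : derivCoeff (b n) j = psiCoeff n j / 2 := by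
  rw [derivCoeff, b_succ, psiCoeff]
  field_simp

theorem powerSum_derivCoeff_b (x : ℝ) :
    powerSum (derivCoeff (b n)) x = powerSum (psiCoeff n) x / 2 := by
  rw [powerSum, powerSum, ← tsum_div_const]
  exact tsum_congr fun j => by rw [derivCoeff_b]; ring

theorem phi0_eq_powerSum (ρ : ℝ) : phi0 n ρ = powerSum (b n) (ρ ^ 2) :=
  tsum_congr fun j => by rw [pow_mul]

theorem hasDerivAt_phi0 (hn : 1 ≤ n) (ρ : ℝ) :
    HasDerivAt (phi0 n) (ρ * powerSum (psiCoeff n) (ρ ^ 2)) ρ := by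
  have hD := ((factorialBounded_b hn).hasDerivAt_powerSum (ρ ^ 2)).comp ρ (hasDerivAt_pow 2 ρ)
  rw [powerSum_derivCoeff_b] at hD
  rw [show phi0 n = powerSum (b n) ∘ (· ^ 2) from funext phi0_eq_powerSum]
  exact hD.congr_deriv (by norm_num; ring)

theorem powerSum_b_pos (hn : 1 ≤ n) {x : ℝ} (hx : 0 ≤ x) : 0 < powerSum (b n) x := by
  have h0 := ((factorialBounded_b hn).summable x).le_tsum 0
    fun j _ => mul_nonneg (b_pos hn j).le (pow_nonneg hx j)
  rw [b_zero, pow_zero, mul_one] at h0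
  exact one_pos.trans_le h0

theorem Psi_eq (hn : 1 ≤ n) (ρ : ℝ) :
    Psi n ρ = powerSum (psiCoeff n) (ρ ^ 2) / powerSum (b n) (ρ ^ 2) := by
  rcases eq_or_ne ρ 0 with rfl | hρ
  · simp [Psi, powerSum_zero, psiCoeff, b_zero]
  · rw [Psi, if_neg hρ, (hasDerivAt_phi0 hn ρ).deriv, phi0_eq_powerSum, mul_div_mul_left _ _ hρ]

theorem antitone_inv_natCast_add_two_mul (hn : 1 ≤ n) :
    Antitone fun j : ℕ => 1 / ((n : ℝ) + 2 * j) := fun i j hij =>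
  one_div_le_one_div_of_le ((one_le_natCast_add_two_mul hn i).trans_lt' one_pos) (by gcongr)

theorem powerSum_derivCoeff_psiCoeff_mul_sub_neg (hn : 1 ≤ n) {x : ℝ} (hx : 0 < x) :
    powerSum (derivCoeff (psiCoeff n)) x * powerSum (b n) x
      - powerSum (psiCoeff n) x * powerSum (derivCoeff (b n)) x < 0 := by
  have hb := factorialBounded_b hn
  have hψ := factorialBounded_psiCoeff hn
  have hwf (j : ℕ) : (j : ℝ) * b n j * x ^ j = b n j * x ^ j * j := by ring
  have hwg (j : ℕ) : psiCoeff n j * x ^ j = b n j * x ^ j * (1 / (n + 2 * j)) := by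
    rw [psiCoeff]; ring
  have hwfg (j : ℕ) : (j : ℝ) * psiCoeff n j * x ^ j = b n j * x ^ j * j * (1 / (n + 2 * j)) := by
    rw [psiCoeff]; ring
  have hchebyshev := tsum_mul_tsum_lt_of_antivary (f := Nat.cast) (i₀ := 0) (k₀ := 1)
    (fun j => mul_nonneg (b_pos hn j).le (pow_nonneg hx.le j))
    (Nat.mono_cast.antivary (antitone_inv_natCast_add_two_mul hn)) (hb.summable x)
    ((hb.summable_natCast_mul x).congr hwf) ((hψ.summable x).congr hwg)
    ((hψ.summable_natCast_mul x).congr hwfg) (by simp [b_zero])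
    (mul_pos (b_pos hn 1) (pow_pos hx 1)) ?_
  · refine neg_of_mul_neg_right ?_ hx.le
    rw [mul_sub, ← mul_assoc, hψ.mul_powerSum_derivCoeff, mul_left_comm,
      hb.mul_powerSum_derivCoeff, powerSum, powerSum, tsum_congr hwf, tsum_congr hwg,
      tsum_congr hwfg]
    linarith
  · have hn' : (0 : ℝ) < n := by exact_mod_cast hn
    simp only [Nat.cast_zero, Nat.cast_one, mul_zero, add_zero, mul_one]
    exact mul_neg_of_neg_of_pos (by norm_num)
      (sub_pos.2 (one_div_lt_one_div_of_lt hn' (by linarith)))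

theorem strictAntiOn_powerSum_psiCoeff_div (hn : 1 ≤ n) :
    StrictAntiOn (fun x => powerSum (psiCoeff n) x / powerSum (b n) x) (Set.Ici 0) := by
  have hb := factorialBounded_b hn
  have hψ := factorialBounded_psiCoeff hn
  refine strictAntiOn_of_deriv_neg (convex_Ici 0)
    (hψ.continuous_powerSum.continuousOn.div hb.continuous_powerSum.continuousOn
      fun x hx => (powerSum_b_pos hn hx).ne') fun x hx => ?_
  rw [interior_Ici] at hx
  rw [((hψ.hasDerivAt_powerSum x).fun_div (hb.hasDerivAt_powerSum x)
    (powerSum_b_pos hn hx.le).ne').deriv]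
  exact div_neg_of_neg_of_pos (powerSum_derivCoeff_psiCoeff_mul_sub_neg hn hx)
      (pow_pos (powerSum_b_pos hn hx.le) 2)

end Bessel

theorem stmt10 (n : ℕ) (hn : 1 ≤ n) :
    (∀ ρ : ℝ, Psi n (-ρ) = Psi n ρ) ∧
    Continuous (Psi n) ∧
    StrictAntiOn (Psi n) (Set.Ici 0) ∧
    (∀ ρ : ℝ, 0 < ρ → Psi n ρ < 1 / (n : ℝ)) := by
  have hPsi : Psi n = (fun x => powerSum (psiCoeff n) x / powerSum (b n) x) ∘ (· ^ 2) :=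
    funext (Psi_eq hn)
  have hanti : StrictAntiOn (Psi n) (Set.Ici 0) := hPsi ▸
    (strictAntiOn_powerSum_psiCoeff_div hn).comp_strictMonoOn (pow_left_strictMonoOn₀ two_ne_zero)
      fun ρ _ => sq_nonneg ρ
  refine ⟨fun ρ => by simp [hPsi], ?_, hanti, fun ρ hρ => ?_⟩
  · rw [hPsi]
    exact ((factorialBounded_psiCoeff hn).continuous_powerSum.comp (continuous_pow 2)).div
      ((factorialBounded_b hn).continuous_powerSum.comp (continuous_pow 2))
      fun ρ => (powerSum_b_pos hn (sq_nonneg ρ)).ne'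
  · calc Psi n ρ < Psi n 0 := hanti Set.self_mem_Ici hρ.le hρ
      _ = 1 / n := if_pos rfl
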